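/- A Schröder tree is left-directed if the rightmost child subtree of each of its internal nodes is a leaf. Let h ∈ G be the indicator function of left-directed Schröder trees (h(t) = 1 if t is left-directed, including the leaf, and h(t) = 0 otherwise), and let f_c ∈ G be the indicator function of corollas (the leaf together with, for each n ≥ 1, the tree whose root has n+1 children, all leaves). Then h = f_c⊣h, and h is the unique element of G satisfying this equation. (Thus the inverse operadic R-transform of the corolla series is the sum of all left-directed Schröder trees.) -/

import Mathlib

inductive PTree : Type where
  | node : List PTree → PTree

mutual
  def leavesT : PTree → ℕ
    | .node [] => 1
    | .node (t :: ts) => leavesT t + leavesL ts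
  def leavesL : List PTree → ℕ
    | [] => 0
    | t :: ts => leavesT t + leavesL ts
end

inductive Reduced : PTree → Prop where
  | leaf : Reduced (.node [])
  | node : ∀ ts : List PTree, 2 ≤ ts.length → (∀ t ∈ ts, Reduced t) → Reduced (.node ts)

mutual
  /-- Replace the leaves of a tree, from left to right, by the trees of a list;
  returns the resulting tree together with the unused trees of the list. -/
  def graftT : PTree → List PTree → PTree × List PTree
    | .node [], l => (l.headD (.node []), l.tail)
    | .node (c :: cs), l =>
        let p := graftL (c :: cs) l
        (.node p.1, p.2)
  def graftL : List PTree → List PTree → List PTree × List PTree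
    | [], l => ([], l)
    | c :: cs, l =>
        let p := graftT c l
        let q := graftL cs p.2
        (p.1 :: q.1, q.2)
end

/-- Schröder trees. -/
def SchT : Type := {t : PTree // Reduced t}

def leafST : SchT := ⟨.node [], Reduced.leaf⟩

/-- Decompositions `t = t₀ ∘ (t₁, …, t_n)` of a Schröder tree, where `t₀` has `n`
leaves. -/
def Decomps (t : SchT) : Set (SchT × List SchT) :=
  {p | (p.2.map Subtype.val).length = leavesT p.1.val ∧
    (graftT p.1.val (p.2.map Subtype.val)).1 = t.val}

/-- The composition product of the group of the Schröder operad: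
`(f∘g)(t) = Σ f(t₀)·g(t₁)⋯g(t_n)` over all decompositions `t = t₀∘(t₁,…,t_n)`. -/
noncomputable def compG (f g : SchT → ℚ) : SchT → ℚ :=
  fun t => ∑ᶠ p ∈ Decomps t, f p.1 * (p.2.map g).prod

/-- `(f⊣g)(t) = Σ f(t₀)·g(t₁)⋯g(t_{n−1})` over decompositions whose last entry is
the leaf. -/
noncomputable def ldash (f g : SchT → ℚ) : SchT → ℚ :=
  fun t => ∑ᶠ p ∈ {p | p ∈ Decomps t ∧ p.2.getLast? = some leafST},
    f p.1 * (p.2.dropLast.map g).prod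

/-- `(f⊢g)(t) = Σ f(t₀)·g(t_n)` over decompositions whose entries `t₁,…,t_{n−1}`
are all leaves. -/
noncomputable def rdash (f g : SchT → ℚ) : SchT → ℚ :=
  fun t => ∑ᶠ p ∈ {p | p ∈ Decomps t ∧ ∀ s ∈ p.2.dropLast, s = leafST},
    f p.1 * g (p.2.getLastD leafST)

/-- The identity element: the indicator function of the leaf. -/
def eG : SchT → ℚ := fun t =>
  match t.val with
  | .node [] => 1
  | _ => 0

/-- Left-directed plane trees: the rightmost child subtree of each internal node
is a leaf. -/
inductive LeftDirected : PTree → Prop where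
  | leaf : LeftDirected (.node [])
  | node : ∀ ts : List PTree, ts.getLast? = some (.node []) →
      (∀ t ∈ ts, LeftDirected t) → LeftDirected (.node ts)

open Classical in
/-- The indicator function of left-directed Schröder trees. -/
noncomputable def hLD : SchT → ℚ := fun t => if LeftDirected t.val then 1 else 0

/-- A corolla: all child subtrees of the root are leaves (the leaf itself is the
corolla with `ts = []`). -/
def IsCorolla (t : PTree) : Prop :=
  ∃ ts : List PTree, t = .node ts ∧ ∀ s ∈ ts, s = PTree.node []

open Classical in
/-- The series of corollas. -/
noncomputable def fc : SchT → ℚ := fun t => if IsCorolla t.val then 1 else 0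

/-!
A corolla can be grafted onto a tree `t` in only two ways: the leaf with input `t`, and the
corolla of the root's arity with the root's children as inputs. Requiring the last input to be
the leaf, `(f_c ⊣ g)(t)` is therefore the product of `g` over all but the last child of the root
if that last child is a leaf (the empty product `1` if `t` is the leaf), and `0` otherwise. The
indicator of left-directed trees satisfies the same recursion on the children of the root, and a
function satisfying such a recursion is unique by induction on trees.
-/

namespace PTree

def children : PTree → List PTree
  | .node ts => ts

@[simp]
lemma children_node (ts : List PTree) : (node ts).children = ts := rfl

lemma node_children (t : PTree) : node t.children = t := by
  cases t; rfl

def corolla (n : ℕ) : PTree := node (List.replicate n (node []))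

lemma isCorolla_corolla (n : ℕ) : IsCorolla (corolla n) :=
  ⟨_, rfl, fun _ hs => List.eq_of_mem_replicate hs⟩

lemma reduced_corolla {n : ℕ} (hn : n ≠ 1) : Reduced (corolla n) := by
  rcases Nat.lt_or_ge n 2 with hlt | hge
  · obtain rfl : n = 0 := by omega
    exact Reduced.leaf
  · exact Reduced.node _ (by simpa using hge) fun _ ht => List.eq_of_mem_replicate ht ▸ Reduced.leaf

lemma leavesL_replicate_leaf (n : ℕ) : leavesL (List.replicate n (node [])) = n := by
  induction n with
  | zero => rfl
  | succ n ih => simp [List.replicate_succ, leavesL, leavesT, ih]; omega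

lemma leavesT_corolla_succ (n : ℕ) : leavesT (corolla (n + 1)) = n + 1 := by
  simp [corolla, List.replicate_succ, leavesT, leavesL_replicate_leaf]; omega

lemma graftL_replicate_leaf (l : List PTree) :
    graftL (List.replicate l.length (node [])) l = (l, []) := by
  induction l with
  | nil => rfl
  | cons x l ih => simp [List.replicate_succ, graftL, graftT, ih]

lemma graftT_corolla {l : List PTree} (hl : l ≠ []) :
    graftT (corolla l.length) l = (node l, []) := by
  obtain ⟨x, l, rfl⟩ := List.exists_cons_of_ne_nil hl
  have h := graftL_replicate_leaf (x :: l)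
  simp only [corolla, List.length_cons, List.replicate_succ] at h ⊢
  simp only [graftT, h]

lemma Reduced.of_mem_children {t c : PTree} (ht : Reduced t) (hc : c ∈ t.children) :
    Reduced c := by
  cases ht with
  | leaf => simp at hc
  | node _ _ h => exact h c hc

lemma leftDirected_node_iff {ts : List PTree} (hts : ts ≠ []) :
    LeftDirected (node ts) ↔ ts.getLast? = some (node []) ∧ ∀ c ∈ ts, LeftDirected c := by
  refine ⟨fun h => ?_, fun h => LeftDirected.node ts h.1 h.2⟩
  cases h with
  | leaf => exact absurd rfl hts
  | node _ hlast hall => exact ⟨hlast, hall⟩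

lemma leftDirected_node_concat {ts : List PTree} {t : PTree} :
    LeftDirected (node (ts ++ [t])) ↔ t = node [] ∧ ∀ c ∈ ts, LeftDirected c := by
  rw [leftDirected_node_iff (by simp), List.getLast?_concat, Option.some_inj]
  constructor
  · rintro ⟨rfl, hall⟩
    exact ⟨rfl, fun c hc => hall c (List.mem_append_left _ hc)⟩
  · rintro ⟨rfl, hall⟩
    refine ⟨rfl, fun c hc => ?_⟩
    rcases List.mem_append.mp hc with hc | hc
    · exact hall c hc
    · rw [List.mem_singleton.mp hc]; exact LeftDirected.leaf

end PTree

lemma IsCorolla.eq_corolla {t : PTree} (ht : IsCorolla t) : ∃ n, t = PTree.corolla n := by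
  obtain ⟨ts, rfl, hts⟩ := ht
  exact ⟨ts.length, congrArg PTree.node (List.eq_replicate_length.mpr hts)⟩

namespace SchT

lemma eq_iff_val_eq {s t : SchT} : s = t ↔ s.val = t.val := Subtype.ext_iff

def children (t : SchT) : List SchT :=
  t.val.children.attach.map fun c => ⟨c.1, PTree.Reduced.of_mem_children t.2 c.2⟩

-- `SchT` is not reducible, so generic `List.map` lemmas do not fire under `rw`/`simp` on lists of
-- Schröder trees; these restatements do.
lemma length_map_val (l : List SchT) : (l.map Subtype.val).length = l.length :=
  List.length_map _

lemma map_val_eq_nil_iff {l : List SchT} : l.map Subtype.val = [] ↔ l = [] :=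
  List.map_eq_nil_iff

lemma map_val_children (t : SchT) : t.children.map Subtype.val = t.val.children :=
  List.map_map.trans (List.attach_map_subtype_val _)

lemma val_eq_node (t : SchT) : t.val = .node (t.children.map Subtype.val) := by
  rw [map_val_children, PTree.node_children]

lemma map_val_injective : Function.Injective (List.map (Subtype.val : SchT → PTree)) :=
  List.map_injective_iff.mpr Subtype.val_injective

lemma children_eq_nil_iff {t : SchT} : t.children = [] ↔ t = leafST := by
  rw [eq_iff_val_eq, val_eq_node t, leafST, PTree.node.injEq, map_val_eq_nil_iff]

lemma length_children_ne_one (t : SchT) : t.children.length ≠ 1 := by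
  rw [← length_map_val, map_val_children]
  obtain ⟨_, ht⟩ := t
  cases ht with
  | leaf => simp
  | node _ h _ => simp; omega

lemma sizeOf_val_lt_of_mem_children {t c : SchT} (hc : c ∈ t.children) :
    sizeOf c.val < sizeOf t.val := by
  have hmem : c.val ∈ t.val.children := map_val_children t ▸ List.mem_map_of_mem hc
  obtain ⟨⟨ts⟩, _⟩ := t
  have := List.sizeOf_lt_of_mem hmem
  simp only [PTree.children_node, PTree.node.sizeOf_spec] at this ⊢
  omega

theorem induction_children {P : SchT → Prop} (step : ∀ t, (∀ c ∈ t.children, P c) → P t)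
    (t : SchT) : P t :=
  step t fun c hc =>
    have := sizeOf_val_lt_of_mem_children hc
    induction_children step c
termination_by sizeOf t.val

theorem eq_of_children_recursion {β : Type*} (Φ : SchT → List β → β) {g₁ g₂ : SchT → β}
    (h₁ : ∀ t, g₁ t = Φ t (t.children.map g₁)) (h₂ : ∀ t, g₂ t = Φ t (t.children.map g₂)) :
    g₁ = g₂ :=
  funext <| induction_children fun t ih => by rw [h₁, h₂, List.map_congr_left ih]

def rootCorolla (t : SchT) : SchT :=
  ⟨PTree.corolla t.children.length, PTree.reduced_corolla t.length_children_ne_one⟩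

def LastChildIsLeaf (t : SchT) : Prop := ∀ c ∈ t.children.getLast?, c = leafST

lemma lastChildIsLeaf_iff {t : SchT} (ht : t.children ≠ []) :
    t.LastChildIsLeaf ↔ t.children.getLast? = some leafST := by
  rw [LastChildIsLeaf, List.getLast?_eq_some_getLast ht]
  simp

end SchT

open SchT

lemma fc_leafST : fc leafST = 1 := if_pos (PTree.isCorolla_corolla 0)

lemma fc_rootCorolla (t : SchT) : fc t.rootCorolla = 1 := if_pos (PTree.isCorolla_corolla _)

lemma IsCorolla.of_fc_ne_zero {t : SchT} (h : fc t ≠ 0) : IsCorolla t.val := by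
  by_contra hc
  exact h (if_neg hc)

lemma leafST_singleton_mem_decomps (t : SchT) : (leafST, [t]) ∈ Decomps t := ⟨rfl, rfl⟩

lemma rootCorolla_children_mem_decomps {t : SchT} (ht : t.children ≠ []) :
    (t.rootCorolla, t.children) ∈ Decomps t := by
  have hne : t.children.map Subtype.val ≠ [] := map_val_eq_nil_iff.not.mpr ht
  refine ⟨?_, ?_⟩
  · obtain ⟨n, hn⟩ := Nat.exists_eq_succ_of_ne_zero (List.length_pos_iff.mpr ht).ne'
    simp only [rootCorolla, length_map_val, hn, PTree.leavesT_corolla_succ]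
  · have h := PTree.graftT_corolla hne
    rw [length_map_val] at h
    simp only [rootCorolla, h]
    exact (val_eq_node t).symm

lemma eq_of_mem_decomps_of_isCorolla {t : SchT} {p : SchT × List SchT} (hp : p ∈ Decomps t)
    (hc : IsCorolla p.1.val) :
    p = (leafST, [t]) ∨ t.children ≠ [] ∧ p = (t.rootCorolla, t.children) := by
  obtain ⟨hlen, hgraft⟩ := hp
  obtain ⟨n, hn⟩ := IsCorolla.eq_corolla hc
  rw [hn] at hlen hgraft
  cases n with
  | zero =>
    obtain ⟨u, hu⟩ := List.length_eq_one_iff.mp ((length_map_val _).symm.trans hlen)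
    rw [hu] at hgraft
    obtain rfl : u = t := Subtype.ext hgraft
    exact Or.inl (Prod.ext (Subtype.ext hn) hu)
  | succ n =>
    rw [PTree.leavesT_corolla_succ] at hlen
    have hne : p.2.map Subtype.val ≠ [] := List.ne_nil_of_length_eq_add_one hlen
    rw [← hlen, PTree.graftT_corolla hne, val_eq_node] at hgraft
    have hl : p.2 = t.children := map_val_injective (PTree.node.inj hgraft)
    refine Or.inr ⟨hl ▸ map_val_eq_nil_iff.not.mp hne, Prod.ext (Subtype.ext ?_) hl⟩
    change p.1.val = PTree.corolla t.children.length
    rw [hn, ← hl, ← length_map_val, hlen]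

open Classical in
lemma finsum_mem_eq_ite_of_ne_zero {α M : Type*} [AddCommMonoid M] {s : Set α} {f : α → M}
    (a : α) (h : ∀ x ∈ s, f x ≠ 0 → x = a) :
    ∑ᶠ x ∈ s, f x = if a ∈ s then f a else 0 := by
  rw [finsum_mem_def, finsum_eq_single _ a, Set.indicator_apply]
  intro x hx
  rw [Set.indicator_apply_eq_zero]
  exact fun hxs => not_not.mp fun hfx => hx (h x hxs hfx)

open Classical in
lemma ldash_fc_apply (g : SchT → ℚ) (t : SchT) :
    ldash fc g t = if t.LastChildIsLeaf then ((t.children.map g).dropLast).prod else 0 := by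
  have hsupp {p} (hp : p ∈ Decomps t) (hF : fc p.1 * (p.2.dropLast.map g).prod ≠ 0) :=
    eq_of_mem_decomps_of_isCorolla hp (.of_fc_ne_zero (left_ne_zero_of_mul hF))
  by_cases ht : t.children = []
  · obtain rfl := children_eq_nil_iff.mp ht
    have hlast : leafST.LastChildIsLeaf := by simp [LastChildIsLeaf, ht]
    have hmem : (leafST, [leafST]) ∈
        {p : SchT × List SchT | p ∈ Decomps leafST ∧ p.2.getLast? = some leafST} :=
      ⟨leafST_singleton_mem_decomps _, rfl⟩
    rw [ldash, finsum_mem_eq_ite_of_ne_zero (leafST, [leafST]), if_pos hmem, if_pos hlast, ht]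
    · simp [fc_leafST]
    · rintro p ⟨hp, -⟩ hF
      rcases hsupp hp hF with h | ⟨h, -⟩
      exacts [h, absurd ht h]
  · rw [ldash, finsum_mem_eq_ite_of_ne_zero (t.rootCorolla, t.children), lastChildIsLeaf_iff ht]
    · simp only [Set.mem_ofPred_eq, rootCorolla_children_mem_decomps ht, true_and, fc_rootCorolla,
        one_mul, List.map_dropLast]
      congr
    · rintro p ⟨hp, hlast⟩ hF
      rcases hsupp hp hF with rfl | ⟨-, h⟩
      · exact absurd (children_eq_nil_iff.mpr (by simpa using hlast)) ht
      · exact h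

lemma leftDirected_val_iff (t : SchT) :
    LeftDirected t.val ↔ t.LastChildIsLeaf ∧ ∀ c ∈ t.children.dropLast, LeftDirected c.val := by
  rcases List.eq_nil_or_concat' t.children with ht | ⟨cs, c, ht⟩
  · obtain rfl := children_eq_nil_iff.mp ht
    simp only [LastChildIsLeaf, ht, List.getLast?_nil, List.dropLast_nil]
    exact iff_of_true LeftDirected.leaf (by simp)
  · have hmap : (cs ++ [c]).map Subtype.val = cs.map Subtype.val ++ [c.val] := List.map_append
    rw [val_eq_node, ht, hmap, PTree.leftDirected_node_concat,
      LastChildIsLeaf, ht, List.getLast?_concat, List.dropLast_concat]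
    refine and_congr ?_ List.forall_mem_map
    simp only [Option.mem_def, Option.some_inj, forall_eq']
    exact (eq_iff_val_eq (t := leafST)).symm

open Classical in
lemma prod_map_hLD (l : List SchT) :
    (l.map hLD).prod = if ∀ c ∈ l, LeftDirected c.val then 1 else 0 := by
  induction l with
  | nil => simp
  | cons c l ih => by_cases hc : LeftDirected c.val <;> simp [hLD, hc, ih]

open Classical in
lemma hLD_apply (t : SchT) :
    hLD t = if t.LastChildIsLeaf then ((t.children.map hLD).dropLast).prod else 0 := by
  rw [← List.map_dropLast, prod_map_hLD, hLD, leftDirected_val_iff]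
  by_cases h : t.LastChildIsLeaf <;> simp [h]

/-- the indicator function `h` of left-directed Schröder trees
satisfies `h = f_c ⊣ h`, and it is the unique element of `G` satisfying this
equation. -/
theorem stmt11 :
    hLD = ldash fc hLD ∧
    (∀ h' : SchT → ℚ, h' leafST = 1 → h' = ldash fc h' → h' = hLD) := by
  classical
  have hLD_fixed : hLD = ldash fc hLD := funext fun t => by rw [hLD_apply, ldash_fc_apply]
  refine ⟨hLD_fixed, fun h' _ h'_fixed => ?_⟩
  refine eq_of_children_recursion
    (fun t l => if t.LastChildIsLeaf then l.dropLast.prod else 0) (fun t => ?_) hLD_apply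
  rw [congrFun h'_fixed t, ldash_fc_apply]
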